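/- arXiv:1109.3159 — 2 statements merged into one kernel-verified Lean document; each statement's English description precedes it below -/
import Mathlib

section
/- Let A ∈ ℝ, c > 0, C ≥ 0, and let b : [A, ∞) → ℝ be a nonnegative C² function with b(A) = 0, satisfying b(t) = O(t^β) for some β > 0, such that b, b', b'' are integrable against e^{-t} dt, and such that b''(t) - b'(t) - c·b(t) ≥ -C·b(t)^{1/2} for all t ≥ A. Then b is bounded above and sup_{t ≥ A} b(t) ≤ (C/c)². -/
/-!
Suppose `b(t₀) > M := (C/c)²`. Wherever `b ≥ M` we have `c b - C √b ≥ 0`, hence `b'' ≥ b'`, so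
`e^{-t} b'(t)` is nondecreasing on every interval on which `b > M`. Since `b(A) = 0 ≤ M`, there is a
last time `α < t₀` with `b(α) ≤ M`, and the mean value theorem gives `ξ ∈ (α, t₀)` with `b'(ξ) > 0`.
If `b` came back down to `M` after `t₀`, it would have to do so with negative slope, against the
monotonicity of `e^{-t} b'`; otherwise `b' ≥ η e^t` on `[ξ, ∞)` for some `η > 0`, so `b` grows
exponentially, against `b = O(t^β)`.
-/

open MeasureTheory Set Filter Asymptotics Real

lemma mul_sub_mul_sqrt_nonneg {c C x : ℝ} (hc : 0 < c) (hx : (C / c) ^ 2 ≤ x) :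
    0 ≤ c * x - C * √x := by
  have hCx : C ≤ c * √x := by
    have hsqrt := Real.sqrt_le_sqrt hx
    rw [Real.sqrt_sq_eq_abs] at hsqrt
    calc C = c * (C / c) := by field_simp
      _ ≤ c * |C / c| := by gcongr; exact le_abs_self _
      _ ≤ c * √x := by gcongr
  calc 0 ≤ √x * (c * √x - C) := mul_nonneg (sqrt_nonneg _) (sub_nonneg.2 hCx)
    _ = c * x - C * √x := by
      rw [mul_sub, mul_left_comm, mul_self_sqrt ((sq_nonneg _).trans hx)]; ring

lemma monotoneOn_of_hasDerivAt_nonneg {D : Set ℝ} (hD : Convex ℝ D) {f f' : ℝ → ℝ}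
    (hf : ∀ x ∈ D, HasDerivAt f (f' x) x) (hf' : ∀ x ∈ D, 0 ≤ f' x) : MonotoneOn f D :=
  monotoneOn_of_hasDerivWithinAt_nonneg hD
    (fun x hx => (hf x hx).continuousAt.continuousWithinAt)
    (fun x hx => (hf x (interior_subset hx)).hasDerivWithinAt)
    fun x hx => hf' x (interior_subset hx)

lemma monotoneOn_exp_neg_mul {D : Set ℝ} (hD : Convex ℝ D) {f f' : ℝ → ℝ}
    (hf : ∀ x ∈ D, HasDerivAt f (f' x) x) (hff' : ∀ x ∈ D, f x ≤ f' x) :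
    MonotoneOn (fun t => exp (-t) * f t) D :=
  monotoneOn_of_hasDerivAt_nonneg hD (f' := fun x => exp (-x) * (f' x - f x))
    (fun x hx => by
      have := (hasDerivAt_neg x).exp.mul (hf x hx)
      exact this.congr_deriv (by ring))
    fun x hx => mul_nonneg (exp_pos _).le (sub_nonneg.2 (hff' x hx))

lemma not_isBigO_rpow_of_monotoneOn_exp_neg_mul_deriv {f f' : ℝ → ℝ} {a : ℝ} (β : ℝ)
    (hf : ∀ x ∈ Ici a, HasDerivAt f (f' x) x) (hf'a : 0 < f' a)
    (hmono : MonotoneOn (fun t => exp (-t) * f' t) (Ici a)) :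
    ¬ f =O[atTop] fun t => t ^ β := by
  intro hO
  set η := exp (-a) * f' a
  have hη : 0 < η := mul_pos (exp_pos _) hf'a
  have hf' : ∀ x ∈ Ici a, η * exp x ≤ f' x := fun x hx =>
    calc η * exp x ≤ exp (-x) * f' x * exp x :=
          mul_le_mul_of_nonneg_right (hmono self_mem_Ici hx hx) (exp_pos x).le
      _ = f' x := by rw [mul_right_comm, ← exp_add, neg_add_cancel, exp_zero, one_mul]
  have hgrow : MonotoneOn (fun t => f t - η * exp t) (Ici a) :=
    monotoneOn_of_hasDerivAt_nonneg (convex_Ici a)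
      (fun x hx => (hf x hx).sub ((hasDerivAt_exp x).const_mul η))
      fun x hx => sub_nonneg.2 (hf' x hx)
  have hsmall : ∀ᶠ t in atTop, ‖f t‖ ≤ η / 2 * ‖exp t‖ :=
    (hO.trans_isLittleO (isLittleO_rpow_exp_atTop β)).bound (half_pos hη)
  obtain ⟨t, ht_small, hat, ht_large⟩ := (hsmall.and ((eventually_ge_atTop a).and
    (tendsto_exp_atTop.eventually_gt_atTop (2 * (η * exp a - f a) / η)))).exists
  have hat' : f a - η * exp a ≤ f t - η * exp t := hgrow self_mem_Ici hat hat
  rw [Real.norm_eq_abs, Real.norm_eq_abs, abs_exp] at ht_small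
  rw [div_lt_iff₀ hη] at ht_large
  linarith [le_abs_self (f t)]

lemma exists_forall_lt_of_le_of_lt {f : ℝ → ℝ} {a b M : ℝ} (hab : a ≤ b)
    (hf : ContinuousOn f (Icc a b)) (ha : f a ≤ M) (hb : M < f b) :
    ∃ α ∈ Ico a b, f α ≤ M ∧ ∀ s ∈ Ioc α b, M < f s := by
  set S := Icc a b ∩ f ⁻¹' Iic M
  have hSbdd : BddAbove S := ⟨b, fun s hs => hs.1.2⟩
  have hα : sSup S ∈ S :=
    (hf.preimage_isClosed_of_isClosed isClosed_Icc isClosed_Iic).csSup_mem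
      ⟨a, ⟨left_mem_Icc.2 hab, ha⟩⟩ hSbdd
  refine ⟨sSup S, ⟨hα.1.1, hα.1.2.lt_of_ne ?_⟩, hα.2, fun s hs => ?_⟩
  · rintro hαb
    exact hb.not_ge (hαb ▸ hα.2)
  · by_contra! hfs
    exact hs.1.not_ge (le_csSup hSbdd ⟨⟨hα.1.1.trans hs.1.le, hs.2⟩, hfs⟩)

lemma exists_forall_lt_of_lt_of_le {f : ℝ → ℝ} {a b M : ℝ} (hab : a ≤ b)
    (hf : ContinuousOn f (Icc a b)) (ha : M < f a) (hb : f b ≤ M) :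
    ∃ ω ∈ Ioc a b, f ω ≤ M ∧ ∀ s ∈ Ico a ω, M < f s := by
  set S := Icc a b ∩ f ⁻¹' Iic M
  have hSbdd : BddBelow S := ⟨a, fun s hs => hs.1.1⟩
  have hω : sInf S ∈ S :=
    (hf.preimage_isClosed_of_isClosed isClosed_Icc isClosed_Iic).csInf_mem
      ⟨b, ⟨right_mem_Icc.2 hab, hb⟩⟩ hSbdd
  refine ⟨sInf S, ⟨hω.1.1.lt_of_ne ?_, hω.1.2⟩, hω.2, fun s hs => ?_⟩
  · rintro haω
    exact ha.not_ge (haω ▸ hω.2)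
  · by_contra! hfs
    exact hs.2.not_ge (csInf_le hSbdd ⟨⟨hs.1, hs.2.le.trans hω.1.2⟩, hfs⟩)

theorem forall_le_of_isBigO_rpow_of_deriv_le_deriv2 {b b' b'' : ℝ → ℝ} {A M β : ℝ}
    (hb : ContinuousOn b (Ici A))
    (hd1 : ∀ t ∈ Ioi A, HasDerivAt b (b' t) t) (hd2 : ∀ t ∈ Ioi A, HasDerivAt b' (b'' t) t)
    (hA : b A ≤ M) (hgrowth : b =O[atTop] fun t => t ^ β)
    (hsub : ∀ t ∈ Ioi A, M < b t → b' t ≤ b'' t) :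
    ∀ t ∈ Ici A, b t ≤ M := by
  intro t₀ (ht₀ : A ≤ t₀)
  by_contra! hbt₀
  obtain ⟨α, ⟨hAα, hαt₀⟩, hbα, hα⟩ :=
    exists_forall_lt_of_le_of_lt ht₀ (hb.mono Icc_subset_Ici_self) hA hbt₀
  obtain ⟨ξ, hξ, hb'ξ⟩ := exists_hasDerivAt_eq_slope b b' hαt₀
    (hb.mono fun x hx => hAα.trans hx.1) fun x hx => hd1 x (hAα.trans_lt hx.1)
  have hb'ξ_pos : 0 < b' ξ := hb'ξ ▸ div_pos (by linarith) (by linarith [hξ.2])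
  have hAξ : A < ξ := hAα.trans_lt hξ.1
  have hH : ∀ D ⊆ Ici ξ, Convex ℝ D → (∀ x ∈ D, M < b x) →
      MonotoneOn (fun t => exp (-t) * b' t) D := fun D hDξ hD hbD =>
    monotoneOn_exp_neg_mul hD (fun x hx => hd2 x (hAξ.trans_le (hDξ hx)))
      fun x hx => hsub x (hAξ.trans_le (hDξ hx)) (hbD x hx)
  by_cases hret : ∃ ω₀ ∈ Ici t₀, b ω₀ ≤ M
  · obtain ⟨ω₀, hω₀, hbω₀⟩ := hret
    obtain ⟨ω, ⟨ht₀ω, -⟩, hbω, hω⟩ := exists_forall_lt_of_lt_of_le hω₀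
      (hb.mono fun x hx => ht₀.trans hx.1) hbt₀ hbω₀
    obtain ⟨ζ, hζ, hb'ζ⟩ := exists_hasDerivAt_eq_slope b b' ht₀ω
      (hb.mono fun x hx => ht₀.trans hx.1) fun x hx => hd1 x (ht₀.trans_lt hx.1)
    have hb'ζ_neg : b' ζ < 0 := hb'ζ ▸ div_neg_of_neg_of_pos (by linarith) (by linarith [hζ.2])
    have hmono := hH (Icc ξ ζ) (fun x hx => hx.1) (convex_Icc ξ ζ) fun x hx => by
      rcases le_or_gt x t₀ with hxt₀ | hxt₀
      · exact hα x ⟨hξ.1.trans_le hx.1, hxt₀⟩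
      · exact hω x ⟨hxt₀.le, hx.2.trans_lt hζ.2⟩
    have hξζ := hmono (left_mem_Icc.2 (hξ.2.trans hζ.1).le)
      (right_mem_Icc.2 (hξ.2.trans hζ.1).le) (hξ.2.trans hζ.1).le
    nlinarith [exp_pos (-ξ), exp_pos (-ζ)]
  · push Not at hret
    have hmono := hH (Ici ξ) subset_rfl (convex_Ici ξ) fun x (hx : ξ ≤ x) => by
      rcases le_or_gt x t₀ with hxt₀ | hxt₀
      · exact hα x ⟨hξ.1.trans_le hx, hxt₀⟩
      · exact hret x hxt₀.le
    exact not_isBigO_rpow_of_monotoneOn_exp_neg_mul_deriv β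
      (fun x (hx : ξ ≤ x) => hd1 x (hAξ.trans_le hx)) hb'ξ_pos hmono hgrowth

theorem stmt_5_general (A c C β : ℝ) (hc : 0 < c)
    (b b' b'' : ℝ → ℝ)
    (hd1 : ∀ t ∈ Set.Ici A, HasDerivWithinAt b (b' t) (Set.Ici A) t)
    (hd2 : ∀ t ∈ Set.Ici A, HasDerivWithinAt b' (b'' t) (Set.Ici A) t)
    (hA : b A = 0)
    (hgrowth : b =O[atTop] fun t => t ^ β)
    (hode : ∀ t ∈ Set.Ici A, b'' t - b' t - c * b t ≥ -C * Real.sqrt (b t)) :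
    ∀ t ∈ Set.Ici A, b t ≤ (C / c) ^ 2 := by
  refine forall_le_of_isBigO_rpow_of_deriv_le_deriv2 (fun t ht => (hd1 t ht).continuousWithinAt)
    (fun t ht => (hd1 t (mem_Ioi.1 ht).le).hasDerivAt (Ici_mem_nhds ht))
    (fun t ht => (hd2 t (mem_Ioi.1 ht).le).hasDerivAt (Ici_mem_nhds ht))
    (hA ▸ sq_nonneg _) hgrowth fun t ht hbt => ?_
  linarith [hode t (mem_Ioi.1 ht).le, mul_sub_mul_sqrt_nonneg hc hbt.le]

/-- ODE comparison lemma (Lemma 1.14): if `b ≥ 0` is `C²` on `[A,∞)`, vanishes at `A`,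
is `O(t^β)` for some `β > 0`, is integrable against `e^{-t} dt` together with its first two
derivatives, and satisfies `b'' - b' - c b ≥ -C √b`, then `b ≤ (C/c)²` on `[A,∞)`. -/
theorem stmt_5 (A c C β : ℝ) (hc : 0 < c) (hC : 0 ≤ C) (hβ : 0 < β)
    (b b' b'' : ℝ → ℝ)
    (hd1 : ∀ t ∈ Set.Ici A, HasDerivWithinAt b (b' t) (Set.Ici A) t)
    (hd2 : ∀ t ∈ Set.Ici A, HasDerivWithinAt b' (b'' t) (Set.Ici A) t)
    (hcont : ContinuousOn b'' (Set.Ici A))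
    (hnn : ∀ t ∈ Set.Ici A, 0 ≤ b t)
    (hA : b A = 0)
    (hgrowth : b =O[atTop] fun t => t ^ β)
    (hib : IntegrableOn (fun t => b t * Real.exp (-t)) (Set.Ici A) volume)
    (hib' : IntegrableOn (fun t => b' t * Real.exp (-t)) (Set.Ici A) volume)
    (hib'' : IntegrableOn (fun t => b'' t * Real.exp (-t)) (Set.Ici A) volume)
    (hode : ∀ t ∈ Set.Ici A, b'' t - b' t - c * b t ≥ -C * Real.sqrt (b t)) :
    ∀ t ∈ Set.Ici A, b t ≤ (C / c) ^ 2 :=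
  stmt_5_general A c C β hc b b' b'' hd1 hd2 hA hgrowth hode
end

section
/- Let (Ω, μ) be a finite measure space, u ≥ 0 measurable, ϵ > 1, C, C' ≥ 0 constants, and suppose ‖u‖_{L²(μ)} ≤ Q₀ < ∞ and that for every p ≥ 2 one has ‖u‖_{L^{pϵ}(μ)}^p ≤ C‖u‖_{L^p(μ)}^p + C'·p·‖u‖_{L^p(μ)}^{p-1}. Then u ∈ L^∞(μ), and there is a bound on ‖u‖_{L^∞(μ)} depending only on ϵ, C, C', Q₀ and μ(Ω). More precisely, there exist constants Q, C₁ > 0 depending only on these data such that ‖u‖_{L^p(μ)} ≤ Q·(C₁ p)^{-m/p} for all p ≥ 2 (for a suitable fixed m > 0), whence ‖u‖_{L^∞(μ)} ≤ Q. -/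
/-
Moser iteration along the exponents `p_k = 2 ϵ^k`. For `a_k = ‖u‖_{p_k}` the hypothesis at `p = p_k`
gives `a_{k+1} ≤ (C + C' p_k)^{1/p_k} max(a_k, 1)`, and `C + C' p_k ≤ c ϵ^k` with `c = C + 2C' + 1`.
The product of these factors is at most `exp (∑ log (c ϵ^k) / (2 ϵ^k)) < ∞`, so the `a_k` stay
bounded. On a finite measure space this bounds every `‖u‖_p`, `p ≥ 2`, by one constant `R`, and
Chebyshev's inequality as `p → ∞` gives `‖u‖_∞ ≤ R`. The stated decay follows from
`p^{-1/p} ≥ e^{-1}`, with `Q = e R`.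
-/

open MeasureTheory Filter Real

open scoped ENNReal

theorem summable_log_mul_pow_div_two_mul_pow {c ϵ : ℝ} (hc : 0 < c) (hϵ : 1 < ϵ) :
    Summable fun k : ℕ => log (c * ϵ ^ k) / (2 * ϵ ^ k) := by
  have hr : ‖ϵ⁻¹‖ < 1 := by
    rw [norm_inv, Real.norm_of_nonneg (by linarith)]; exact inv_lt_one_of_one_lt₀ hϵ
  have hgeom := (summable_geometric_of_norm_lt_one hr).mul_left (log c / 2)
  have harith := (summable_pow_mul_geometric_of_norm_lt_one 1 hr).mul_left (log ϵ / 2)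
  refine (hgeom.add harith).congr fun k => ?_
  rw [log_mul hc.ne' (pow_pos (by linarith) k).ne', log_pow, inv_pow]
  field_simp

namespace ENNReal

theorem le_rpow_inv_mul_max_one_of_rpow_le {x y A B : ℝ≥0∞} {p : ℝ} (hp : 1 ≤ p)
    (h : x ^ p ≤ A * y ^ p + B * y ^ (p - 1)) : x ≤ (A + B) ^ p⁻¹ * max y 1 := by
  have hp0 : 0 < p := by linarith
  have hm : 1 ≤ max y 1 := le_max_right _ _
  have hx : x ^ p ≤ (A + B) * max y 1 ^ p := calc
    x ^ p ≤ A * y ^ p + B * y ^ (p - 1) := h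
    _ ≤ A * max y 1 ^ p + B * max y 1 ^ p := by
      gcongr
      · exact le_max_left _ _
      · calc y ^ (p - 1) ≤ max y 1 ^ (p - 1) := rpow_le_rpow (le_max_left _ _) (by linarith)
          _ ≤ max y 1 ^ p := rpow_le_rpow_of_exponent_le hm (by linarith)
    _ = (A + B) * max y 1 ^ p := by ring
  rwa [← rpow_le_rpow_iff hp0, mul_rpow_of_nonneg _ _ hp0.le, ← rpow_mul,
    inv_mul_cancel₀ hp0.ne', rpow_one]

theorem le_ofReal_mul_exp_tsum_of_le_exp_mul_max_one {a : ℕ → ℝ≥0∞} {g : ℕ → ℝ} {B : ℝ}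
    (hg : Summable g) (hg0 : ∀ k, 0 ≤ g k) (h0 : a 0 ≤ ENNReal.ofReal B)
    (hstep : ∀ k, a (k + 1) ≤ ENNReal.ofReal (exp (g k)) * max (a k) 1) (k : ℕ) :
    a k ≤ ENNReal.ofReal (max B 1 * exp (∑' j, g j)) := by
  have hpartial : ∀ k, a k ≤ ENNReal.ofReal (max B 1 * exp (∑ j ∈ Finset.range k, g j)) := by
    intro k
    induction k with
    | zero => simpa using .inl h0
    | succ k ih =>
      have hone : (1 : ℝ) ≤ max B 1 * exp (∑ j ∈ Finset.range k, g j) :=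
        one_le_mul_of_one_le_of_one_le (le_max_right _ _)
          (one_le_exp (Finset.sum_nonneg fun j _ => hg0 j))
      calc a (k + 1) ≤ ENNReal.ofReal (exp (g k)) * max (a k) 1 := hstep k
        _ ≤ ENNReal.ofReal (exp (g k)) *
            ENNReal.ofReal (max B 1 * exp (∑ j ∈ Finset.range k, g j)) := by
          gcongr
          exact max_le ih (by simpa using ofReal_le_ofReal hone)
        _ = ENNReal.ofReal (max B 1 * exp (∑ j ∈ Finset.range (k + 1), g j)) := by
          rw [← ofReal_mul (exp_pos _).le, Finset.sum_range_succ, exp_add]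
          ring_nf
  refine (hpartial k).trans (ofReal_le_ofReal ?_)
  gcongr
  exact hg.sum_le_tsum _ fun j _ => hg0 j

theorem le_ofReal_exp_log_div_mul_max_one_of_rpow_le {x y : ℝ≥0∞} {C C' ϵ : ℝ} (hC : 0 ≤ C)
    (hC' : 0 ≤ C') (hϵ : 1 ≤ ϵ) (k : ℕ)
    (h : x ^ (2 * ϵ ^ k) ≤ ENNReal.ofReal C * y ^ (2 * ϵ ^ k) +
      ENNReal.ofReal (C' * (2 * ϵ ^ k)) * y ^ (2 * ϵ ^ k - 1)) :
    x ≤ ENNReal.ofReal (exp (Real.log ((C + 2 * C' + 1) * ϵ ^ k) / (2 * ϵ ^ k))) * max y 1 := by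
  have hϵk : 1 ≤ ϵ ^ k := one_le_pow₀ hϵ
  refine (le_rpow_inv_mul_max_one_of_rpow_le (by linarith) h).trans ?_
  gcongr
  have hcoef : C + C' * (2 * ϵ ^ k) ≤ (C + 2 * C' + 1) * ϵ ^ k := by nlinarith
  calc (ENNReal.ofReal C + ENNReal.ofReal (C' * (2 * ϵ ^ k))) ^ (2 * ϵ ^ k)⁻¹
      ≤ ENNReal.ofReal ((C + 2 * C' + 1) * ϵ ^ k) ^ (2 * ϵ ^ k)⁻¹ := by
        rw [← ofReal_add hC (by positivity)]
        gcongr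
    _ = _ := by
        rw [ofReal_rpow_of_nonneg (by positivity) (by positivity),
          rpow_def_of_pos (by positivity), div_eq_mul_inv]

theorem exists_pos_forall_le_ofReal_of_rpow_le {a : ℕ → ℝ≥0∞} {C C' ϵ Q₀ : ℝ} (hC : 0 ≤ C)
    (hC' : 0 ≤ C') (hϵ : 1 < ϵ) (h0 : a 0 ≤ ENNReal.ofReal Q₀)
    (hstep : ∀ k : ℕ, a (k + 1) ^ (2 * ϵ ^ k) ≤ ENNReal.ofReal C * a k ^ (2 * ϵ ^ k) +
      ENNReal.ofReal (C' * (2 * ϵ ^ k)) * a k ^ (2 * ϵ ^ k - 1)) :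
    ∃ B > 0, ∀ k, a k ≤ ENNReal.ofReal B := by
  have hc : 1 ≤ C + 2 * C' + 1 := by linarith
  refine ⟨_, by positivity, le_ofReal_mul_exp_tsum_of_le_exp_mul_max_one
    (summable_log_mul_pow_div_two_mul_pow (by linarith) hϵ) (fun k => ?_) h0
    (fun k => le_ofReal_exp_log_div_mul_max_one_of_rpow_le hC hC' hϵ.le k (hstep k))⟩
  exact div_nonneg (log_nonneg (one_le_mul_of_one_le_of_one_le hc (one_le_pow₀ hϵ.le)))
    (by positivity)

end ENNReal

section

variable {α E : Type*} [MeasurableSpace α] {μ : Measure α} [NormedAddCommGroup E] {f : α → E}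

theorem eLpNorm_le_eLpNorm_mul_max_measure_univ_one {p q : ℝ≥0∞} (hp : 1 ≤ p) (hpq : p ≤ q)
    (hf : AEStronglyMeasurable f μ) : eLpNorm f p μ ≤ eLpNorm f q μ * max (μ Set.univ) 1 := by
  refine (eLpNorm_le_eLpNorm_mul_rpow_measure_univ hpq hf).trans ?_
  gcongr
  have hp1 : 1 / p.toReal ≤ 1 := by
    rcases eq_or_ne p ⊤ with rfl | hp_top
    · simp
    · exact div_le_one_of_le₀ (by simpa using ENNReal.toReal_mono hp_top hp) ENNReal.toReal_nonneg
  have hqp : 1 / q.toReal ≤ 1 / p.toReal := by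
    rcases eq_or_ne q ⊤ with rfl | hq_top
    · simp
    · have hp0 : 0 < p.toReal := ENNReal.toReal_pos (by positivity) (ne_top_of_le_ne_top hq_top hpq)
      exact one_div_le_one_div_of_le hp0 (ENNReal.toReal_mono hq_top hpq)
  have hq0 : 0 ≤ 1 / q.toReal := one_div_nonneg.2 ENNReal.toReal_nonneg
  calc μ Set.univ ^ (1 / p.toReal - 1 / q.toReal)
      ≤ max (μ Set.univ) 1 ^ (1 / p.toReal - 1 / q.toReal) :=
        ENNReal.rpow_le_rpow (le_max_left _ _) (by linarith)
    _ ≤ max (μ Set.univ) 1 ^ (1 : ℝ) :=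
        ENNReal.rpow_le_rpow_of_exponent_le (le_max_right _ _) (by linarith)
    _ = max (μ Set.univ) 1 := ENNReal.rpow_one _

theorem eLpNorm_le_ofReal_mul_of_forall_eLpNorm_le [IsFiniteMeasure μ] {q : ℕ → ℝ} {B : ℝ}
    (hq : ∀ p, ∃ k, p ≤ q k) (hB : 0 ≤ B) (hf : AEStronglyMeasurable f μ)
    (h : ∀ k, eLpNorm f (ENNReal.ofReal (q k)) μ ≤ ENNReal.ofReal B) {p : ℝ} (hp : 1 ≤ p) :
    eLpNorm f (ENNReal.ofReal p) μ ≤ ENNReal.ofReal (B * max (μ Set.univ).toReal 1) := by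
  obtain ⟨k, hk⟩ := hq p
  calc eLpNorm f (ENNReal.ofReal p) μ
      ≤ eLpNorm f (ENNReal.ofReal (q k)) μ * max (μ Set.univ) 1 :=
        eLpNorm_le_eLpNorm_mul_max_measure_univ_one (by simpa using hp)
          (ENNReal.ofReal_le_ofReal hk) hf
    _ ≤ ENNReal.ofReal B * ENNReal.ofReal (max (μ Set.univ).toReal 1) := by
        rw [ENNReal.ofReal_max, ENNReal.ofReal_toReal (measure_ne_top μ _), ENNReal.ofReal_one]
        gcongr
        exact h k
    _ = ENNReal.ofReal (B * max (μ Set.univ).toReal 1) := (ENNReal.ofReal_mul hB).symm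

theorem eLpNorm_top_le_of_forall_eLpNorm_le {R : ℝ≥0∞} {p₀ : ℝ} (hf : AEStronglyMeasurable f μ)
    (h : ∀ p : ℝ, p₀ ≤ p → eLpNorm f (ENNReal.ofReal p) μ ≤ R) : eLpNorm f ⊤ μ ≤ R := by
  refine le_of_forall_gt_imp_ge_of_dense fun Q hRQ => ?_
  rcases eq_or_ne Q ⊤ with rfl | hQ_top
  · exact le_top
  have hQ0 : Q ≠ 0 := (hRQ.trans_le' bot_le).ne'
  have hratio : Q⁻¹ * R < 1 := by
    rwa [mul_comm, ← div_eq_mul_inv, ENNReal.div_lt_iff (Or.inl hQ0) (Or.inl hQ_top), one_mul]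
  have hchebyshev : ∀ n : ℕ, max p₀ 1 ≤ n → μ {x | Q ≤ ‖f x‖ₑ} ≤ (Q⁻¹ * R) ^ n := by
    intro n hn
    have hn0 : (n : ℝ≥0∞) ≠ 0 := by
      have : 1 ≤ n := Nat.one_le_cast.1 ((le_max_right _ _).trans hn)
      exact Nat.cast_ne_zero.2 (by omega)
    calc μ {x | Q ≤ ‖f x‖ₑ} ≤ Q⁻¹ ^ (n : ℝ) * eLpNorm f n μ ^ (n : ℝ) := by
          simpa using meas_ge_le_mul_pow_eLpNorm_enorm μ hn0 (ENNReal.natCast_ne_top n) hf hQ0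
            (fun h => absurd h hQ_top)
      _ ≤ Q⁻¹ ^ (n : ℝ) * R ^ (n : ℝ) := by
          gcongr
          simpa using h n ((le_max_left _ _).trans hn)
      _ = (Q⁻¹ * R) ^ n := by
          rw [← ENNReal.mul_rpow_of_nonneg _ _ n.cast_nonneg, ENNReal.rpow_natCast]
  have hnull : μ {x | Q ≤ ‖f x‖ₑ} = 0 :=
    le_antisymm (ge_of_tendsto (ENNReal.tendsto_pow_atTop_nhds_zero_of_lt_one hratio)
      ((eventually_ge_atTop ⌈max p₀ 1⌉₊).mono fun n hn =>
        hchebyshev n ((Nat.le_ceil _).trans (by exact_mod_cast hn)))) bot_le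
  rw [eLpNorm_exponent_top]
  refine eLpNormEssSup_le_of_ae_enorm_bound ?_
  filter_upwards [measure_eq_zero_iff_ae_notMem.1 hnull] with x hx
  exact (not_le.1 hx).le

end

theorem Real.one_le_exp_one_mul_rpow_neg_one_div {p : ℝ} (hp : 0 < p) :
    1 ≤ exp 1 * p ^ (-(1 / p)) := by
  rw [rpow_def_of_pos hp, ← exp_add, one_le_exp_iff, mul_neg, mul_one_div, ← sub_eq_add_neg,
    sub_nonneg, div_le_one hp]
  linarith [log_le_sub_one_of_pos hp]

theorem stmt_13_general {Ω : Type*} [MeasurableSpace Ω] (μ : Measure Ω) [IsFiniteMeasure μ]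
    (u : Ω → ℝ) (hmeas : AEMeasurable u μ)
    (ϵ C C' Q₀ : ℝ) (hϵ : 1 < ϵ) (hC : 0 ≤ C) (hC' : 0 ≤ C')
    (hQ₀ : eLpNorm u 2 μ ≤ ENNReal.ofReal Q₀)
    (hrec : ∀ p : ℝ, 2 ≤ p →
      eLpNorm u (ENNReal.ofReal (p * ϵ)) μ ^ p ≤
        ENNReal.ofReal C * eLpNorm u (ENNReal.ofReal p) μ ^ p +
          ENNReal.ofReal (C' * p) * eLpNorm u (ENNReal.ofReal p) μ ^ (p - 1)) :
    MemLp u ⊤ μ ∧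
    ∃ Q C₁ m : ℝ, 0 < Q ∧ 0 < C₁ ∧ 0 < m ∧
      (∀ p : ℝ, 2 ≤ p →
        eLpNorm u (ENNReal.ofReal p) μ ≤ ENNReal.ofReal (Q * (C₁ * p) ^ (-(m / p)))) ∧
      eLpNorm u ⊤ μ ≤ ENNReal.ofReal Q := by
  have hf := hmeas.aestronglyMeasurable
  obtain ⟨B, hB, hiter⟩ := ENNReal.exists_pos_forall_le_ofReal_of_rpow_le
    (a := fun k => eLpNorm u (ENNReal.ofReal (2 * ϵ ^ k)) μ) hC hC' hϵ (by simpa using hQ₀)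
    fun k => by
      rw [pow_succ, ← mul_assoc]
      exact hrec _ (by linarith [one_le_pow₀ (n := k) hϵ.le])
  set R := B * max (μ Set.univ).toReal 1
  have hR (p : ℝ) (hp : 2 ≤ p) : eLpNorm u (ENNReal.ofReal p) μ ≤ ENNReal.ofReal R :=
    eLpNorm_le_ofReal_mul_of_forall_eLpNorm_le
      (fun p => (pow_unbounded_of_one_lt (p / 2) hϵ).imp fun k hk => by linarith)
      (by positivity) hf hiter (by linarith)
  have htop : eLpNorm u ⊤ μ ≤ ENNReal.ofReal R := eLpNorm_top_le_of_forall_eLpNorm_le hf hR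
  have hR0 : 0 < R := by positivity
  refine ⟨⟨hf, htop.trans_lt ENNReal.ofReal_lt_top⟩, R * exp 1, 1, 1, by positivity, one_pos,
    one_pos, fun p hp => (hR p hp).trans (ENNReal.ofReal_le_ofReal ?_),
    htop.trans (ENNReal.ofReal_le_ofReal (le_mul_of_one_le_right hR0.le (one_le_exp zero_le_one)))⟩
  rw [one_mul, mul_assoc]
  exact le_mul_of_one_le_right hR0.le (one_le_exp_one_mul_rpow_neg_one_div (by linarith))

/-- Abstract Moser iteration: on a finite measure space, if `u ≥ 0` has
`‖u‖_{L²} ≤ Q₀ < ∞` and satisfies, for all `p ≥ 2`, the inductive control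
`‖u‖_{L^{pϵ}}^p ≤ C ‖u‖_{L^p}^p + C' p ‖u‖_{L^p}^{p-1}` with `ϵ > 1`, then `u ∈ L^∞`
with a bound from the data; more precisely `‖u‖_{L^p} ≤ Q (C₁ p)^{-m/p}` for all `p ≥ 2`
for suitable constants `Q, C₁, m > 0`, whence `‖u‖_{L^∞} ≤ Q`. -/
theorem stmt_13 {Ω : Type*} [MeasurableSpace Ω] (μ : Measure Ω) [IsFiniteMeasure μ]
    (u : Ω → ℝ) (hmeas : AEMeasurable u μ) (hpos : ∀ x, 0 ≤ u x)
    (ϵ C C' Q₀ : ℝ) (hϵ : 1 < ϵ) (hC : 0 ≤ C) (hC' : 0 ≤ C')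
    (hQ₀ : eLpNorm u 2 μ ≤ ENNReal.ofReal Q₀)
    (hrec : ∀ p : ℝ, 2 ≤ p →
      eLpNorm u (ENNReal.ofReal (p * ϵ)) μ ^ p ≤
        ENNReal.ofReal C * eLpNorm u (ENNReal.ofReal p) μ ^ p +
          ENNReal.ofReal (C' * p) * eLpNorm u (ENNReal.ofReal p) μ ^ (p - 1)) :
    MemLp u ⊤ μ ∧
    ∃ Q C₁ m : ℝ, 0 < Q ∧ 0 < C₁ ∧ 0 < m ∧
      (∀ p : ℝ, 2 ≤ p →
        eLpNorm u (ENNReal.ofReal p) μ ≤ ENNReal.ofReal (Q * (C₁ * p) ^ (-(m / p)))) ∧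
      eLpNorm u ⊤ μ ≤ ENNReal.ofReal Q :=
  stmt_13_general μ u hmeas ϵ C C' Q₀ hϵ hC hC' hQ₀ hrec
end
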